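/- arXiv:2311.11034 — 11 statements merged into one kernel-verified Lean document; each statement's English description precedes it below -/
import Mathlib

section
/- For the bidirected n-gon (n ≥ 3) with bimodule map σ on Ω¹ ⊗ Ω¹ defined by σ(ξ_{μ→μ+1} ⊗ ξ_{μ+1→μ}) = ξ_{μ→μ−1} ⊗ ξ_{μ−1→μ}, σ(ξ_{μ→μ−1} ⊗ ξ_{μ−1→μ}) = ξ_{μ→μ+1} ⊗ ξ_{μ+1→μ}, and σ fixing ξ_{μ→μ+1}⊗ξ_{μ+1→μ+2} and ξ_{μ→μ−1}⊗ξ_{μ−1→μ−2}, the maps σ₁₂ = σ⊗id and σ₂₃ = id⊗σ on Ω¹ ⊗ Ω¹ ⊗ Ω¹ satisfy the braid relation σ₁₂σ₂₃σ₁₂ = σ₂₃σ₁₂σ₂₃. -/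
/-- Functions on composable 3-paths of the bidirected `n`-gon: `(μ, d₁, d₂, d₃)`
is the path starting at `μ` with successive directions `d₁, d₂, d₃`
(`true` = `+1` edge, `false` = `−1` edge). This is the ℂ-basis of `(Ω¹)^{⊗3}`. -/
abbrev Poly3 (n : ℕ) := ZMod n × Bool × Bool × Bool → ℂ

/-- `σ₁₂ = σ ⊗ id`: on basis 3-paths, `σ` applied to the first two legs swaps the
two directions of a returning 2-path and fixes non-returning ones, i.e. it swaps
`d₁` and `d₂`. -/
noncomputable def sig12 (n : ℕ) : Poly3 n →ₗ[ℂ] Poly3 n :=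
  LinearMap.funLeft ℂ ℂ fun p => (p.1, p.2.2.1, p.2.1, p.2.2.2)

/-- `σ₂₃ = id ⊗ σ`: swaps `d₂` and `d₃`. -/
noncomputable def sig23 (n : ℕ) : Poly3 n →ₗ[ℂ] Poly3 n :=
  LinearMap.funLeft ℂ ℂ fun p => (p.1, p.2.1, p.2.2.2, p.2.2.1)

/-- the braid relation `σ₁₂σ₂₃σ₁₂ = σ₂₃σ₁₂σ₂₃` holds on
`Ω¹ ⊗ Ω¹ ⊗ Ω¹` for the bidirected `n`-gon. -/
theorem stmt5 (n : ℕ) (hn : 3 ≤ n) :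
    sig12 n ∘ₗ sig23 n ∘ₗ sig12 n = sig23 n ∘ₗ sig12 n ∘ₗ sig23 n := by
  ext f p
  simp [sig12, sig23]
end

section
/- For the bidirected n-gon with σ as above, the antisymmetrization map A₂ = σ − id on Ω¹ ⊗ Ω¹ has kernel spanned by the elements {ξ_{μ→μ+1}⊗ξ_{μ+1→μ+2}, ξ_{μ→μ−1}⊗ξ_{μ−1→μ−2}, ξ_{μ→μ+1}⊗ξ_{μ+1→μ} + ξ_{μ→μ−1}⊗ξ_{μ−1→μ} : μ ∈ ℤ/n}, and consequently the quotient Ω² := (Ω¹ ⊗ Ω¹)/ker(A₂) has ℂ-dimension n. -/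
/-- ℂ-basis-coefficient model of `Ω¹ ⊗_A Ω¹` for the bidirected `n`-gon:
index `(μ, d₁, d₂)` is the 2-path `ξ_{μ→μ+ε(d₁)} ⊗ ξ_{μ+ε(d₁)→μ+ε(d₁)+ε(d₂)}`. -/
abbrev Poly2 (n : ℕ) := ZMod n × Bool × Bool → ℂ

/-- the basis 2-path `(μ, d₁, d₂)`. -/
noncomputable def e2 (n : ℕ) (μ : ZMod n) (d₁ d₂ : Bool) : Poly2 n :=
  Pi.single (μ, d₁, d₂) 1

/-- the bimodule map `σ`: swaps the directions of the two legs. -/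
noncomputable def sig (n : ℕ) : Poly2 n →ₗ[ℂ] Poly2 n :=
  LinearMap.funLeft ℂ ℂ fun p => (p.1, p.2.2, p.2.1)

/-- the "antisymmetric coefficient" map. -/
noncomputable def Tmap (n : ℕ) : Poly2 n →ₗ[ℂ] (ZMod n → ℂ) where
  toFun f := fun μ => f (μ, true, false) - f (μ, false, true)
  map_add' f g := by funext μ; simp; ring
  map_smul' c f := by funext μ; simp; ring

lemma mem_ker_iff (n : ℕ) (f : Poly2 n) :
    f ∈ LinearMap.ker (sig n - LinearMap.id) ↔
      ∀ μ : ZMod n, f (μ, true, false) = f (μ, false, true) := by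
  constructor
  · intro hf μ
    have := congrFun (LinearMap.mem_ker.mp hf) (μ, false, true)
    simpa [sig, LinearMap.funLeft, sub_eq_zero] using this
  · intro h
    apply LinearMap.mem_ker.mpr
    funext p
    obtain ⟨μ, d₁, d₂⟩ := p
    simp only [LinearMap.sub_apply, LinearMap.id_apply, Pi.sub_apply, Pi.zero_apply,
      sub_eq_zero]
    show f (μ, d₂, d₁) = f (μ, d₁, d₂)
    cases d₁ <;> cases d₂ <;> first | rfl | exact h μ | exact (h μ).symm

/-- the kernel of `A₂ = σ − id` is spanned by the non-returning
2-paths `ξ_{μ→μ+1}⊗ξ_{μ+1→μ+2}`, `ξ_{μ→μ−1}⊗ξ_{μ−1→μ−2}`, and the sums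
`ξ_{μ→μ+1}⊗ξ_{μ+1→μ} + ξ_{μ→μ−1}⊗ξ_{μ−1→μ}`; consequently
`Ω² = (Ω¹⊗Ω¹)/ker A₂` has ℂ-dimension `n`. -/
theorem stmt7 (n : ℕ) [NeZero n] (hn : 3 ≤ n) :
    LinearMap.ker (sig n - LinearMap.id)
      = Submodule.span ℂ ((Set.range fun μ : ZMod n => e2 n μ true true)
          ∪ (Set.range fun μ : ZMod n => e2 n μ false false)
          ∪ (Set.range fun μ : ZMod n => e2 n μ true false + e2 n μ false true))
  ∧ Module.finrank ℂ (Poly2 n ⧸ LinearMap.ker (sig n - LinearMap.id)) = n := by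
  constructor
  · apply le_antisymm
    · intro f hf
      have h := (mem_ker_iff n f).mp hf
      have hdecomp : f = ∑ μ : ZMod n,
          (f (μ, true, true) • e2 n μ true true
            + f (μ, false, false) • e2 n μ false false
            + f (μ, true, false) • (e2 n μ true false + e2 n μ false true)) := by
        funext p
        obtain ⟨μ, d₁, d₂⟩ := p
        rw [Finset.sum_apply]
        cases d₁ <;> cases d₂ <;>
          simp [e2, Pi.single_apply, Prod.ext_iff, Finset.sum_ite_eq, h μ]
      rw [hdecomp]
      refine Submodule.sum_mem _ fun μ _ => ?_
      refine Submodule.add_mem _ (Submodule.add_mem _ ?_ ?_) ?_ <;>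
        refine Submodule.smul_mem _ _ (Submodule.subset_span ?_)
      · exact Or.inl (Or.inl ⟨μ, rfl⟩)
      · exact Or.inl (Or.inr ⟨μ, rfl⟩)
      · exact Or.inr ⟨μ, rfl⟩
    · rw [Submodule.span_le]
      rintro x ((⟨μ, rfl⟩ | ⟨μ, rfl⟩) | ⟨μ, rfl⟩) <;>
        refine (mem_ker_iff n _).mpr fun ν => ?_ <;>
        simp [e2, Pi.single_apply, Prod.ext_iff]
  · have hker : LinearMap.ker (sig n - LinearMap.id) = LinearMap.ker (Tmap n) := by
      ext f
      rw [mem_ker_iff]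
      constructor
      · intro h
        apply LinearMap.mem_ker.mpr
        funext μ
        simp [Tmap, h μ, sub_eq_zero]
      · intro h μ
        have := congrFun (LinearMap.mem_ker.mp h) μ
        simpa [Tmap, sub_eq_zero] using this
    rw [hker]
    have hsurj : Function.Surjective (Tmap n) := by
      intro g
      refine ⟨fun p => if p.2.1 = true ∧ p.2.2 = false then g p.1 else 0, ?_⟩
      funext μ
      simp [Tmap]
    have e := (Tmap n).quotKerEquivRange
    rw [LinearMap.range_eq_top.mpr hsurj] at e
    have := (e.trans (Submodule.topEquiv)).finrank_eq
    rw [this]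
    simp [Module.finrank_fintype_fun_eq_card]
end

section
/- For the bidirected n-gon with σ as above, the antisymmetrization map A₃ := id + σ₁₂σ₂₃ + σ₂₃σ₁₂ − σ₁₂ − σ₂₃ − σ₁₂σ₂₃σ₁₂ is identically zero on Ω¹ ⊗ Ω¹ ⊗ Ω¹. Hence the space of 3-forms Ω³ = (Ω¹)^{⊗3}/ker(A₃) vanishes and the differential calculus has dimension 2. -/
/-- the Woronowicz antisymmetrizer
`A₃ = id + σ₁₂σ₂₃ + σ₂₃σ₁₂ − σ₁₂ − σ₂₃ − σ₁₂σ₂₃σ₁₂`. -/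
noncomputable def A3 (n : ℕ) : Poly3 n →ₗ[ℂ] Poly3 n :=
  LinearMap.id + sig12 n ∘ₗ sig23 n + sig23 n ∘ₗ sig12 n
    - sig12 n - sig23 n - sig12 n ∘ₗ sig23 n ∘ₗ sig12 n

/-!
`A₃` sends `f` to the signed sum of `f` over the six permutations of the direction labels
`(d₁, d₂, d₃)` of a 3-path. There are only two directions, so two of the three labels coincide;
the transposition exchanging them fixes the path, and the signed sum cancels in pairs.
-/

theorem alternating_sum_three_eq_zero {D M : Type*} [AddCommGroup M] (g : D → D → D → M)
    {a b c : D} (h : a = b ∨ b = c ∨ a = c) :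
    g a b c + g b c a + g c a b - g b a c - g a c b - g c b a = 0 := by
  rcases h with rfl | rfl | rfl <;> abel

theorem Bool.eq_or_eq_or_eq (a b c : Bool) : a = b ∨ b = c ∨ a = c := by
  decide +revert

theorem A3_apply (n : ℕ) (f : Poly3 n) (μ : ZMod n) (a b c : Bool) :
    A3 n f (μ, a, b, c) =
      f (μ, a, b, c) + f (μ, b, c, a) + f (μ, c, a, b)
        - f (μ, b, a, c) - f (μ, a, c, b) - f (μ, c, b, a) :=
  rfl

theorem A3_eq_zero (n : ℕ) : A3 n = 0 := by
  ext f ⟨μ, a, b, c⟩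
  rw [A3_apply]
  exact alternating_sum_three_eq_zero (fun x y z => f (μ, x, y, z)) (Bool.eq_or_eq_or_eq a b c)

theorem stmt8_general (n : ℕ) :
    A3 n = 0 ∧ Subsingleton (Poly3 n ⧸ LinearMap.ker (A3 n)) := by
  refine ⟨A3_eq_zero n, ?_⟩
  rw [Submodule.Quotient.subsingleton_iff, A3_eq_zero, LinearMap.ker_zero]

/-- `A₃ = 0` on `Ω¹ ⊗ Ω¹ ⊗ Ω¹`; hence `Ω³ = (Ω¹)^{⊗3}/ker A₃`
vanishes (so the calculus has dimension 2). -/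
theorem stmt8 (n : ℕ) (hn : 3 ≤ n) :
    A3 n = 0 ∧ Subsingleton (Poly3 n ⧸ LinearMap.ker (A3 n)) :=
  stmt8_general n
end

section
/- In Ω²(A) for the bidirected n-gon (the quotient of Ω¹⊗Ω¹ by ker(σ − id)), the relation ξ_{μ→μ+1} ∧ ξ_{μ+1→μ} = −ξ_{μ→μ−1} ∧ ξ_{μ−1→μ} holds for every μ ∈ ℤ/n, and {ξ_{μ→μ−1} ∧ ξ_{μ−1→μ} : μ ∈ ℤ/n} is a ℂ-linear basis of Ω²(A). -/
/-- `ker (σ - id)`, i.e. `ker A₂`. -/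
noncomputable def ker2 (n : ℕ) : Submodule ℂ (Poly2 n) :=
  LinearMap.ker (sig n - LinearMap.id)

/-- `Ω²(A) = (Ω¹ ⊗ Ω¹) / ker A₂`. -/
abbrev Om2 (n : ℕ) := Poly2 n ⧸ ker2 n

/-- the quotient (wedge) map `Ω¹ ⊗ Ω¹ → Ω²`. -/
noncomputable def mk2 (n : ℕ) : Poly2 n →ₗ[ℂ] Om2 n := (ker2 n).mkQ

/-! `σ` fixes every 2-path except the two 2-loops `μ → μ ± 1 → μ` at each vertex, which it swaps.
Hence `ker (σ - id)` is exactly the kernel of the surjection `f ↦ (μ ↦ f(loop₋) - f(loop₊))`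
onto `ℂ^{ℤ/n}` (with `loop₋ = (μ, false, true)`, `loop₊ = (μ, true, false)`), so `Ω²(A) ≅ ℂ^{ℤ/n}`; under this isomorphism `ξ_{μ→μ−1} ∧ ξ_{μ−1→μ}` is the
`μ`-th standard basis vector and `ξ_{μ→μ+1} ∧ ξ_{μ+1→μ}` its negative. -/

noncomputable def wedgeCoord (n : ℕ) : Poly2 n →ₗ[ℂ] (ZMod n → ℂ) where
  toFun f μ := f (μ, false, true) - f (μ, true, false)
  map_add' f g := by ext μ; simp only [Pi.add_apply]; ring
  map_smul' c f := by ext μ; simp only [Pi.smul_apply, smul_eq_mul, RingHom.id_apply]; ring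

theorem ker2_eq_ker_wedgeCoord (n : ℕ) : ker2 n = LinearMap.ker (wedgeCoord n) := by
  ext f
  simp only [ker2, sig, wedgeCoord, LinearMap.mem_ker, LinearMap.sub_apply, LinearMap.id_apply,
    LinearMap.coe_mk, AddHom.coe_mk, LinearMap.funLeft_apply, sub_eq_zero, funext_iff,
    Pi.zero_apply, Prod.forall, Bool.forall_bool]
  grind

theorem wedgeCoord_surjective (n : ℕ) : Function.Surjective (wedgeCoord n) := by
  intro g
  refine ⟨fun p => if p.2 = (false, true) then g p.1 else 0, ?_⟩
  ext μ
  simp [wedgeCoord]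

noncomputable def om2EquivFun (n : ℕ) : Om2 n ≃ₗ[ℂ] (ZMod n → ℂ) :=
  (ker2 n).quotEquivOfEq _ (ker2_eq_ker_wedgeCoord n) ≪≫ₗ
    (wedgeCoord n).quotKerEquivOfSurjective (wedgeCoord_surjective n)

theorem om2EquivFun_mk2 (n : ℕ) (f : Poly2 n) : om2EquivFun n (mk2 n f) = wedgeCoord n f := by
  simp [om2EquivFun, mk2]

theorem wedgeCoord_e2_false_true (n : ℕ) (μ : ZMod n) :
    wedgeCoord n (e2 n μ false true) = Pi.single μ 1 := by
  ext ν
  by_cases h : ν = μ <;> simp [wedgeCoord, e2, h]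

theorem wedgeCoord_e2_true_false (n : ℕ) (μ : ZMod n) :
    wedgeCoord n (e2 n μ true false) = -Pi.single μ 1 := by
  ext ν
  by_cases h : ν = μ <;> simp [wedgeCoord, e2, h]

noncomputable def om2Basis (n : ℕ) [NeZero n] : Module.Basis (ZMod n) ℂ (Om2 n) :=
  (Pi.basisFun ℂ (ZMod n)).map (om2EquivFun n).symm

theorem om2Basis_apply (n : ℕ) [NeZero n] (μ : ZMod n) :
    om2Basis n μ = mk2 n (e2 n μ false true) := by
  rw [om2Basis, Module.Basis.map_apply, LinearEquiv.symm_apply_eq, om2EquivFun_mk2,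
    wedgeCoord_e2_false_true, Pi.basisFun_apply]

theorem stmt9_general (n : ℕ) [NeZero n] :
    (∀ μ : ZMod n, mk2 n (e2 n μ true false) = - mk2 n (e2 n μ false true))
  ∧ LinearIndependent ℂ (fun μ : ZMod n => mk2 n (e2 n μ false true))
  ∧ Submodule.span ℂ (Set.range fun μ : ZMod n => mk2 n (e2 n μ false true)) = ⊤ := by
  have hbasis : ⇑(om2Basis n) = fun μ => mk2 n (e2 n μ false true) := funext (om2Basis_apply n)
  refine ⟨fun μ => (om2EquivFun n).injective ?_, ?_, ?_⟩
  · rw [map_neg, om2EquivFun_mk2, om2EquivFun_mk2, wedgeCoord_e2_true_false,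
      wedgeCoord_e2_false_true]
  · exact hbasis ▸ (om2Basis n).linearIndependent
  · exact hbasis ▸ (om2Basis n).span_eq

/-- in `Ω²(A)`, `ξ_{μ→μ+1} ∧ ξ_{μ+1→μ} = − ξ_{μ→μ−1} ∧ ξ_{μ−1→μ}`
for all `μ`, and `{ξ_{μ→μ−1} ∧ ξ_{μ−1→μ}}_{μ ∈ ℤ/n}` is a ℂ-linear basis of `Ω²(A)`. -/
theorem stmt9 (n : ℕ) [NeZero n] (hn : 3 ≤ n) :
    (∀ μ : ZMod n, mk2 n (e2 n μ true false) = - mk2 n (e2 n μ false true))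
  ∧ LinearIndependent ℂ (fun μ : ZMod n => mk2 n (e2 n μ false true))
  ∧ Submodule.span ℂ (Set.range fun μ : ZMod n => mk2 n (e2 n μ false true)) = ⊤ :=
  stmt9_general n
end

section
/- For the bidirected n-gon, Ω¹(A) is a free left A-module of rank 2 with basis {X₁, X₂} where X₁ = Σ_{μ∈ℤ/n} ξ_{μ→μ+1} and X₂ = Σ_{μ∈ℤ/n} ξ_{μ→μ−1}: every ω ∈ Ω¹(A) can be written uniquely as ω = f·X₁ + g·X₂ with f, g ∈ A. -/
/-- `Ω¹(A)` for the bidirected `n`-gon: the edge `(μ, true)` is `μ→μ+1` and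
`(μ, false)` is `μ→μ−1`. -/
abbrev Poly1 (n : ℕ) := ZMod n × Bool → ℂ

/-- left action of `f ∈ A = C(ℤ/n)`: `(f·ω)(x→y) = f x · ω(x→y)`. -/
noncomputable def lAct1 (n : ℕ) (f : ZMod n → ℂ) (ω : Poly1 n) : Poly1 n :=
  fun e => f e.1 * ω e

/-- `X₁ = Σ_μ ξ_{μ→μ+1}`. -/
noncomputable def X1 (n : ℕ) : Poly1 n := fun e => if e.2 then 1 else 0

/-- `X₂ = Σ_μ ξ_{μ→μ−1}`. -/
noncomputable def X2 (n : ℕ) : Poly1 n := fun e => if e.2 then 0 else 1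

/-- `Ω¹(A)` is a free left `A`-module of rank 2 with basis
`{X₁, X₂}`: every `ω` is uniquely `f·X₁ + g·X₂`. -/
theorem stmt11 (n : ℕ) [NeZero n] (hn : 3 ≤ n) (ω : Poly1 n) :
    ∃! fg : (ZMod n → ℂ) × (ZMod n → ℂ),
      ω = lAct1 n fg.1 (X1 n) + lAct1 n fg.2 (X2 n) := by
  refine ⟨(fun μ => ω (μ, true), fun μ => ω (μ, false)), ?_, ?_⟩
  · funext e
    obtain ⟨μ, b⟩ := e
    cases b <;> simp [lAct1, X1, X2]
  · rintro ⟨f, g⟩ h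
    have h1 : ∀ μ, f μ = ω (μ, true) := fun μ => by
      have := congrFun h (μ, true); simp [lAct1, X1, X2] at this; simp [this]
    have h2 : ∀ μ, g μ = ω (μ, false) := fun μ => by
      have := congrFun h (μ, false); simp [lAct1, X1, X2] at this; simp [this]
    exact Prod.ext (funext h1) (funext h2)
end

section
/- Define ∫ : Ω²(A) → ℂ for the bidirected n-gon by ∫ Σ_μ c_μ ξ_{μ→μ−1}∧ξ_{μ−1→μ} = (1/n) Σ_μ c_μ. Then for d extended to 1-forms by dω = θ∧ω + ω∧θ with θ = Σ_μ(ξ_{μ→μ+1}+ξ_{μ→μ−1}), one has ∫ dω = 0 for all ω ∈ Ω¹(A). -/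
/-- `ε(true) = 1`, `ε(false) = −1`. -/
def eps (n : ℕ) (d : Bool) : ZMod n := if d then 1 else -1

/-- the tensor/wedge representative: `(ω₁ ⊗ ω₂)(μ,d₁,d₂) = ω₁(μ,d₁) ω₂(μ+ε(d₁),d₂)`. -/
noncomputable def tens (n : ℕ) (ω₁ ω₂ : Poly1 n) : Poly2 n :=
  fun p => ω₁ (p.1, p.2.1) * ω₂ (p.1 + eps n p.2.1, p.2.2)

/-- the closed graded trace `∫` evaluated on (a representative of) a 2-form: since in
`Ω²(A)` the non-returning 2-paths vanish and `ξ_{μ→μ+1}∧ξ_{μ+1→μ} = −ξ_{μ→μ−1}∧ξ_{μ−1→μ}`,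
`∫ Σ c_μ ξ_{μ→μ−1}∧ξ_{μ−1→μ} = (1/n) Σ c_μ` becomes
`∫ η = (1/n) Σ_μ (η(μ,false,true) − η(μ,true,false))`. -/
noncomputable def intT (n : ℕ) [NeZero n] (η : Poly2 n) : ℂ :=
  (1 / (n : ℂ)) * ∑ μ : ZMod n, (η (μ, false, true) - η (μ, true, false))

/-- `θ = Σ_{edges} ξ`, the constant function 1 on edges. -/
noncomputable def theta (n : ℕ) : Poly1 n := fun _ => 1

/-- for `dω = θ∧ω + ω∧θ`, one has `∫ dω = 0` for every `ω ∈ Ω¹(A)`. -/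
theorem stmt12 (n : ℕ) [NeZero n] (hn : 3 ≤ n) :
    ∀ ω : Poly1 n, intT n (tens n (theta n) ω + tens n ω (theta n)) = 0 := by
  intro ω
  unfold intT tens theta eps
  simp only [Pi.add_apply]
  have : ∑ μ : ZMod n,
      ((1 * ω (μ + (-1 : ZMod n), true) + ω (μ, false) * 1) -
       (1 * ω (μ + 1, false) + ω (μ, true) * 1)) = 0 := by
    simp only [one_mul, mul_one]
    have h1 : ∑ μ : ZMod n, ω (μ + (-1 : ZMod n), true) = ∑ μ : ZMod n, ω (μ, true) :=
      Fintype.sum_equiv (Equiv.addRight (-1 : ZMod n)) _ _ (fun _ => rfl)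
    have h2 : ∑ μ : ZMod n, ω (μ + 1, false) = ∑ μ : ZMod n, ω (μ, false) :=
      Fintype.sum_equiv (Equiv.addRight (1 : ZMod n)) _ _ (fun _ => rfl)
    rw [Finset.sum_sub_distrib, Finset.sum_add_distrib, Finset.sum_add_distrib, h1, h2]
    ring
  exact mul_eq_zero_of_right _ (by simpa using this)
end

section
/- With ∫ as above on the bidirected n-gon, for any two 1-forms ω₁, ω₂ ∈ Ω¹(A) one has ∫(ω₁∧ω₂ + ω₂∧ω₁) = 0, i.e., ∫ is a closed graded trace of dimension 2. -/
/-- graded trace property: `∫ (ω₁∧ω₂ + ω₂∧ω₁) = 0` for all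
1-forms `ω₁, ω₂`. -/
theorem stmt13 (n : ℕ) [NeZero n] (hn : 3 ≤ n) :
    ∀ ω₁ ω₂ : Poly1 n, intT n (tens n ω₁ ω₂ + tens n ω₂ ω₁) = 0 := by
  intro ω₁ ω₂
  have key : ∀ f g : Poly1 n,
      ∑ μ : ZMod n, f (μ, false) * g (μ + eps n false, true)
        = ∑ μ : ZMod n, g (μ, true) * f (μ + eps n true, false) := by
    intro f g
    rw [← Equiv.sum_comp (Equiv.addRight (1 : ZMod n))]
    apply Finset.sum_congr rfl
    intro μ _
    simp [eps, mul_comm, add_assoc]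
  unfold intT tens
  rw [mul_eq_zero]; right
  simp only [Pi.add_apply]
  have : ∀ μ : ZMod n,
      (ω₁ (μ, false) * ω₂ (μ + eps n false, true) + ω₂ (μ, false) * ω₁ (μ + eps n false, true))
        - (ω₁ (μ, true) * ω₂ (μ + eps n true, false) + ω₂ (μ, true) * ω₁ (μ + eps n true, false))
      = (ω₁ (μ, false) * ω₂ (μ + eps n false, true) - ω₂ (μ, true) * ω₁ (μ + eps n true, false))
        + (ω₂ (μ, false) * ω₁ (μ + eps n false, true) - ω₁ (μ, true) * ω₂ (μ + eps n true, false)) := by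
    intro μ; ring
  simp only [this]
  rw [Finset.sum_add_distrib, Finset.sum_sub_distrib, Finset.sum_sub_distrib,
    key ω₁ ω₂, key ω₂ ω₁]
  ring
end

section
/- For the bidirected n-gon with ∂̄ : Ω^{1,0} → Ω^{1,1} given on the basis by ∂̄(ξ_{μ→μ+1}) = ξ_{μ→μ+1}∧ξ_{μ+1→μ} − ξ_{μ+1→μ+2}∧ξ_{μ+2→μ+1}, the kernel of ∂̄ is the one-dimensional span of Σ_{μ∈ℤ/n} ξ_{μ→μ+1}; hence H^{1,0}_∂̄(A) ≅ ℂ. Moreover, the image of ∂̄ has dimension n−1 in the n-dimensional space Ω^{1,1} = Ω²(A), so H^{1,1}_∂̄(A) = Ω²/Im(∂̄) ≅ ℂ. -/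
/-- `∂̄ : Ω^{1,0} → Ω^{1,1}` for the bidirected `n`-gon, in coordinates:
`Ω^{1,0}` has basis `{ξ_{μ→μ+1}}` and `Ω^{1,1} = Ω²` has basis
`{ξ_{μ→μ+1}∧ξ_{μ+1→μ}}`, both indexed by `ℤ/n`.  Since
`∂̄(ξ_{μ→μ+1}) = ξ_{μ→μ+1}∧ξ_{μ+1→μ} − ξ_{μ+1→μ+2}∧ξ_{μ+2→μ+1}`, in coefficients
`(∂̄c)(ν) = c(ν) − c(ν−1)`. -/
noncomputable def dbar (n : ℕ) : (ZMod n → ℂ) →ₗ[ℂ] (ZMod n → ℂ) :=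
  LinearMap.id - LinearMap.funLeft ℂ ℂ (fun ν : ZMod n => ν - 1)

lemma ker_dbar (n : ℕ) [NeZero n] :
    LinearMap.ker (dbar n) = Submodule.span ℂ {(fun _ => 1 : ZMod n → ℂ)} := by
  ext c
  simp only [LinearMap.mem_ker, dbar, LinearMap.sub_apply, LinearMap.id_apply,
    LinearMap.funLeft_apply, Submodule.mem_span_singleton]
  constructor
  · intro h
    have h' : ∀ ν : ZMod n, c ν = c (ν - 1) := fun ν => by
      have := congrFun h ν
      simpa [sub_eq_zero] using this
    refine ⟨c 0, ?_⟩
    have key : ∀ k : ℕ, c (k : ZMod n) = c 0 := by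
      intro k
      induction k with
      | zero => simp
      | succ m ih =>
        have := h' ((m : ZMod n) + 1)
        push_cast
        simp only [add_sub_cancel_right] at this
        rw [this, ih]
    funext ν
    obtain ⟨k, rfl⟩ := ZMod.natCast_zmod_surjective (n := n) ν
    simp [key k]
  · rintro ⟨a, rfl⟩
    funext ν
    simp

/-- `ker ∂̄` is the span of `Σ_μ ξ_{μ→μ+1}` (the constant function 1),
so `H^{1,0} ≅ ℂ`; the image of `∂̄` has dimension `n−1` in the `n`-dimensional
`Ω^{1,1}`, so `H^{1,1} = Ω²/Im ∂̄ ≅ ℂ`. -/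
theorem stmt16 (n : ℕ) [NeZero n] (hn : 3 ≤ n) :
    LinearMap.ker (dbar n) = Submodule.span ℂ {(fun _ => 1 : ZMod n → ℂ)}
  ∧ Module.finrank ℂ (LinearMap.range (dbar n)) = n - 1
  ∧ Module.finrank ℂ ((ZMod n → ℂ) ⧸ LinearMap.range (dbar n)) = 1 := by
  have hker := ker_dbar n
  have hone : (fun _ => 1 : ZMod n → ℂ) ≠ 0 := by
    intro h
    have := congrFun h 0
    simp at this
  have hkdim : Module.finrank ℂ (LinearMap.ker (dbar n)) = 1 := by
    rw [hker, finrank_span_singleton hone]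
  have htot : Module.finrank ℂ (ZMod n → ℂ) = n := by
    simp [Module.finrank_pi]
  have hrn := LinearMap.finrank_range_add_finrank_ker (dbar n)
  rw [htot, hkdim] at hrn
  have hrange : Module.finrank ℂ (LinearMap.range (dbar n)) = n - 1 := by omega
  refine ⟨hker, hrange, ?_⟩
  have hq := Submodule.finrank_quotient_add_finrank (LinearMap.range (dbar n))
  rw [htot, hrange] at hq
  omega
end

section
/- Define ∇̄ : Ω¹(A) → Ω^{0,1} ⊗_A Ω¹(A) on the bidirected n-gon by ∇̄(ξ_{μ→μ+1}) = ξ_{μ+1→μ}⊗ξ_{μ→μ+1} − ξ_{μ→μ−1}⊗ξ_{μ−1→μ} and ∇̄(ξ_{μ→μ−1}) = ξ_{μ+1→μ}⊗ξ_{μ→μ−1} − ξ_{μ→μ−1}⊗ξ_{μ−1→μ−2}, extended ℂ-linearly. Then ker(∇̄) is the 2-dimensional space spanned by X₁ = Σ_μ ξ_{μ→μ+1} and X₂ = Σ_μ ξ_{μ→μ−1}; i.e., H⁰(Ω¹(A), ∇̄) ≅ ℂ². -/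
/-- `∇̄ : Ω¹ → Ω^{0,1} ⊗_A Ω¹` in coordinates: `Ω^{0,1} ⊗_A Ω¹` has ℂ-basis the
2-paths `ξ_{ν→ν−1} ⊗ ξ_{(ν−1) → ·}` indexed by `(ν, d)` (the second leg has
direction `d` from `ν−1`), which identifies it with `Poly1 n`.  Since
`∇̄(ξ_{μ,d}) = ξ_{μ+1→μ}⊗ξ_{μ,d} − ξ_{μ→μ−1}⊗ξ_{μ−1,d}`, in coefficients
`(∇̄ω)(ν,d) = ω(ν−1,d) − ω(ν,d)`. -/
noncomputable def nabBar (n : ℕ) : Poly1 n →ₗ[ℂ] Poly1 n :=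
  LinearMap.funLeft ℂ ℂ (fun e : ZMod n × Bool => (e.1 - 1, e.2)) - LinearMap.id

lemma ker_eq (n : ℕ) [NeZero n] :
    LinearMap.ker (nabBar n) = Submodule.span ℂ {X1 n, X2 n} := by
  ext ω
  simp only [LinearMap.mem_ker, nabBar, LinearMap.sub_apply, LinearMap.funLeft_apply,
    LinearMap.id_apply]
  constructor
  · intro h
    have h' : ∀ e : ZMod n × Bool, ω (e.1 - 1, e.2) = ω e := by
      intro e
      have := congrFun h e
      simp only [Pi.sub_apply, Pi.zero_apply, sub_eq_zero] at this
      exact this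
    have hconst : ∀ (μ : ZMod n) (d : Bool), ω (μ, d) = ω (0, d) := by
      have key : ∀ (k : ℕ) (d : Bool), ω ((k : ZMod n), d) = ω (0, d) := by
        intro k d
        induction k with
        | zero => simp
        | succ m ih =>
          have := h' (((m : ℕ) + 1 : ℕ), d)
          push_cast at this ⊢
          rw [add_sub_cancel_right] at this
          rw [← this]
          exact ih
      intro μ d
      obtain ⟨k, rfl⟩ := ZMod.natCast_rightInverse.surjective μ
      exact key k d
    have : ω = ω (0, true) • X1 n + ω (0, false) • X2 n := by
      funext e
      obtain ⟨μ, d⟩ := e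
      cases d <;> simp [X1, X2, hconst]
    rw [this]
    exact Submodule.add_mem _
      (Submodule.smul_mem _ _ (Submodule.subset_span (by simp)))
      (Submodule.smul_mem _ _ (Submodule.subset_span (by simp)))
  · intro h
    have hsub : Submodule.span ℂ {X1 n, X2 n} ≤ LinearMap.ker (nabBar n) := by
      rw [Submodule.span_le]
      rintro x (rfl | rfl) <;>
        · simp only [SetLike.mem_coe, LinearMap.mem_ker, nabBar, LinearMap.sub_apply,
            LinearMap.id_apply]
          funext e
          simp [X1, X2]
    have := hsub h
    rw [LinearMap.mem_ker, nabBar] at this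
    exact this


/-- `ker ∇̄` is the 2-dimensional span of `X₁` and `X₂`, i.e.
`H⁰(Ω¹(A), ∇̄) ≅ ℂ²`. -/
theorem stmt17 (n : ℕ) [NeZero n] (hn : 3 ≤ n) :
    LinearMap.ker (nabBar n) = Submodule.span ℂ {X1 n, X2 n}
  ∧ Module.finrank ℂ (LinearMap.ker (nabBar n)) = 2 := by
  refine ⟨ker_eq n, ?_⟩
  rw [ker_eq n]
  have hli : LinearIndependent ℂ ![X1 n, X2 n] := by
    rw [LinearIndependent.pair_iff]
    intro s t hst
    have h1 := congrFun hst ((0 : ZMod n), true)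
    have h2 := congrFun hst ((0 : ZMod n), false)
    simp [X1, X2] at h1 h2
    exact ⟨h1, h2⟩
  have : ({X1 n, X2 n} : Set (Poly1 n)) = Set.range ![X1 n, X2 n] := by
    ext x; simp [Set.range, Fin.exists_fin_two, eq_comm]
  rw [this, finrank_span_eq_card hli]
  simp
end

section
/- Let X₁ = Σ_μ ξ_{μ→μ+1} and X₂ = Σ_μ ξ_{μ→μ−1} in Ω¹(A) for the bidirected n-gon. Then in Ω²(A): X₁∧X₁ = 0, X₂∧X₂ = 0, and X₁∧X₂ = −X₂∧X₁ ≠ 0. Consequently the graded ring ℂ·1 ⊕ span{X₁,X₂} ⊕ span{X₁∧X₂} under the wedge product is isomorphic as a graded ℂ-algebra to the exterior algebra Λ•(ℂ²). -/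
/-- the wedge product `Ω¹ × Ω¹ → Ω²`. -/
noncomputable def wdg (n : ℕ) (ω₁ ω₂ : Poly1 n) : Om2 n :=
  (ker2 n).mkQ (tens n ω₁ ω₂)

/-- the graded vector space `ℂ ⊕ Ω¹ ⊕ Ω²` in which the ring of holomorphic
sections `R = ℂ·1 ⊕ span{X₁,X₂} ⊕ span{X₁∧X₂}` lives. -/
abbrev Wring (n : ℕ) := ℂ × Poly1 n × Om2 n

/-- the multiplication on `ℂ ⊕ Ω¹ ⊕ Ω²` (wedge product; degree-0 scalars act by
scalar multiplication, degree ≥ 3 parts vanish). -/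
noncomputable def Rmul (n : ℕ) (x y : Wring n) : Wring n :=
  (x.1 * y.1, x.1 • y.2.1 + y.1 • x.2.1, x.1 • y.2.2 + y.1 • x.2.2 + wdg n x.2.1 y.2.1)

/-- `R ⊕ M ⊕ N` with product `(a, m, u) (b, m', u') = (a b, a m' + b m, a u' + b u + β m m')`;
`β` enters only through the multiplication. -/
def TruncatedAlgebra {R M N : Type*} [CommRing R] [AddCommGroup M] [Module R M]
    [AddCommGroup N] [Module R N] (_β : M →ₗ[R] M →ₗ[R] N) : Type _ :=
  R × M × N

namespace TruncatedAlgebra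

variable {R M N : Type*} [CommRing R] [AddCommGroup M] [Module R M] [AddCommGroup N] [Module R N]
  {β : M →ₗ[R] M →ₗ[R] N}

instance : AddCommGroup (TruncatedAlgebra β) := inferInstanceAs (AddCommGroup (R × M × N))

instance : Module R (TruncatedAlgebra β) := inferInstanceAs (Module R (R × M × N))

variable (β) in
def equivProd : TruncatedAlgebra β ≃ₗ[R] R × M × N := LinearEquiv.refl R _

instance : One (TruncatedAlgebra β) := ⟨(equivProd β).symm (1, 0, 0)⟩

instance : Mul (TruncatedAlgebra β) where
  mul x y :=
    let (a, m, u) := equivProd β x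
    let (b, m', u') := equivProd β y
    (equivProd β).symm (a * b, a • m' + b • m, a • u' + b • u + β m m')

lemma equivProd_one : equivProd β 1 = (1, 0, 0) := rfl

lemma equivProd_mul (x y : TruncatedAlgebra β) :
    equivProd β (x * y) =
      ((equivProd β x).1 * (equivProd β y).1,
        (equivProd β x).1 • (equivProd β y).2.1 + (equivProd β y).1 • (equivProd β x).2.1,
        (equivProd β x).1 • (equivProd β y).2.2 + (equivProd β y).1 • (equivProd β x).2.2 +
          β (equivProd β x).2.1 (equivProd β y).2.1) := rfl

lemma ext_equivProd {x y : TruncatedAlgebra β}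
    (h₀ : (equivProd β x).1 = (equivProd β y).1) (h₁ : (equivProd β x).2.1 = (equivProd β y).2.1)
    (h₂ : (equivProd β x).2.2 = (equivProd β y).2.2) : x = y :=
  (equivProd β).injective (Prod.ext h₀ (Prod.ext h₁ h₂))

instance : Ring (TruncatedAlgebra β) where
  left_distrib _ _ _ := by
    refine ext_equivProd (mul_add _ _ _) ?_ ?_ <;> simp [equivProd_mul] <;> module
  right_distrib _ _ _ := by
    refine ext_equivProd (add_mul _ _ _) ?_ ?_ <;> simp [equivProd_mul] <;> module
  zero_mul _ := by apply ext_equivProd <;> simp [equivProd_mul]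
  mul_zero _ := by apply ext_equivProd <;> simp [equivProd_mul]
  mul_assoc _ _ _ := by
    refine ext_equivProd (mul_assoc _ _ _) ?_ ?_ <;> simp [equivProd_mul] <;> module
  one_mul _ := by apply ext_equivProd <;> simp [equivProd_mul, equivProd_one]
  mul_one _ := by apply ext_equivProd <;> simp [equivProd_mul, equivProd_one]

instance : Algebra R (TruncatedAlgebra β) :=
  Algebra.ofModule
    (fun _ _ _ => by
      refine ext_equivProd (smul_mul_assoc _ _ _) ?_ ?_ <;> simp [equivProd_mul] <;> module)
    (fun _ _ _ => by
      refine ext_equivProd (mul_smul_comm _ _ _) ?_ ?_ <;> simp [equivProd_mul] <;> module)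

variable (β) in
def ofDeg1 : M →ₗ[R] TruncatedAlgebra β :=
  (equivProd β).symm.toLinearMap ∘ₗ LinearMap.inr R R (M × N) ∘ₗ LinearMap.inl R M N

lemma equivProd_ofDeg1 (m : M) : equivProd β (ofDeg1 β m) = (0, m, 0) := rfl

lemma ofDeg1_mul_ofDeg1 (m m' : M) :
    ofDeg1 β m * ofDeg1 β m' = (equivProd β).symm (0, 0, β m m') :=
  ext_equivProd (zero_mul _) (by simp [equivProd_mul, equivProd_ofDeg1])
    (by simp [equivProd_mul, equivProd_ofDeg1])

variable (β) in
def liftOfSelfEqZero {V : Type*} [AddCommGroup V] [Module R V] (f : V →ₗ[R] M)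
    (hf : ∀ v, β (f v) (f v) = 0) : ExteriorAlgebra R V →ₐ[R] TruncatedAlgebra β :=
  ExteriorAlgebra.lift R
    ⟨ofDeg1 β ∘ₗ f, fun v => by simp [ofDeg1_mul_ofDeg1, hf]⟩

lemma liftOfSelfEqZero_ι {V : Type*} [AddCommGroup V] [Module R V] (f : V →ₗ[R] M)
    (hf : ∀ v, β (f v) (f v) = 0) (v : V) :
    liftOfSelfEqZero β f hf (ExteriorAlgebra.ι R v) = ofDeg1 β (f v) :=
  ExteriorAlgebra.lift_ι_apply _ _ _ _

end TruncatedAlgebra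

lemma ExteriorAlgebra.finrank_eq_two_pow {R M : Type*} [CommRing R] [StrongRankCondition R]
    [AddCommGroup M] [Module R M] [Module.Free R M] [Module.Finite R M] :
    Module.finrank R (ExteriorAlgebra R M) = 2 ^ Module.finrank R M := by
  rw [Module.finrank_eq_card_basis (Module.finBasis R M).ExteriorAlgebra, Fintype.card_finset,
    Fintype.card_fin]

noncomputable def tensₗ (n : ℕ) : Poly1 n →ₗ[ℂ] Poly1 n →ₗ[ℂ] Poly2 n :=
  LinearMap.mk₂ ℂ (tens n) (fun _ _ _ => funext fun _ => add_mul _ _ _)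
    (fun _ _ _ => funext fun _ => mul_assoc _ _ _)
    (fun _ _ _ => funext fun _ => mul_add _ _ _)
    (fun _ _ _ => funext fun _ => mul_left_comm _ _ _)

noncomputable def wedge (n : ℕ) : Poly1 n →ₗ[ℂ] Poly1 n →ₗ[ℂ] Om2 n :=
  (tensₗ n).compr₂ (ker2 n).mkQ

lemma sig_sig (n : ℕ) (t : Poly2 n) : sig n (sig n t) = t := rfl

lemma wdg_eq_zero_of_sig_tens {n : ℕ} {ω η : Poly1 n} (h : sig n (tens n ω η) = tens n ω η) :
    wdg n ω η = 0 :=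
  (Submodule.Quotient.mk_eq_zero _).2 (by simp [ker2, h])

lemma wdg_add_wdg_swap_of_sig_tens {n : ℕ} {ω η : Poly1 n}
    (h : sig n (tens n ω η) = tens n η ω) : wdg n ω η + wdg n η ω = 0 := by
  have h' : sig n (tens n η ω) = tens n ω η := by rw [← h, sig_sig]
  rw [wdg, wdg, ← map_add, Submodule.mkQ_apply, Submodule.Quotient.mk_eq_zero]
  simp [ker2, h, h', add_comm]

noncomputable def invariantForm (n : ℕ) : (Bool → ℂ) →ₗ[ℂ] Poly1 n :=
  LinearMap.funLeft ℂ ℂ Prod.snd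

lemma sig_tens_invariantForm (n : ℕ) (c c' : Bool → ℂ) :
    sig n (tens n (invariantForm n c) (invariantForm n c')) =
      tens n (invariantForm n c') (invariantForm n c) :=
  funext fun _ => mul_comm _ _

lemma wdg_invariantForm_self (n : ℕ) (c : Bool → ℂ) :
    wdg n (invariantForm n c) (invariantForm n c) = 0 :=
  wdg_eq_zero_of_sig_tens (sig_tens_invariantForm n c c)

lemma wdg_invariantForm_anticomm (n : ℕ) (c c' : Bool → ℂ) :
    wdg n (invariantForm n c) (invariantForm n c') =
      - wdg n (invariantForm n c') (invariantForm n c) :=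
  eq_neg_of_add_eq_zero_left (wdg_add_wdg_swap_of_sig_tens (sig_tens_invariantForm n c c'))

lemma X1_eq_invariantForm (n : ℕ) : X1 n = invariantForm n fun d => if d then 1 else 0 := rfl

lemma X2_eq_invariantForm (n : ℕ) : X2 n = invariantForm n fun d => if d then 0 else 1 := rfl

lemma wdg_X1_X2_ne_zero (n : ℕ) : wdg n (X1 n) (X2 n) ≠ 0 := by
  intro h
  have := congrFun ((Submodule.Quotient.mk_eq_zero _).1 h) (0, true, false)
  simp [sig, tens, X1, X2, LinearMap.funLeft] at this

/-- `v ↦ v 0 • X₁ + v 1 • X₂`. -/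
noncomputable def coordForm (n : ℕ) : (Fin 2 → ℂ) →ₗ[ℂ] Poly1 n :=
  invariantForm n ∘ₗ LinearMap.funLeft ℂ ℂ fun d : Bool => if d then 0 else 1

lemma coordForm_single_zero (n : ℕ) : coordForm n (Pi.single 0 1) = X1 n := by
  funext ⟨μ, d⟩; cases d <;> rfl

lemma coordForm_single_one (n : ℕ) : coordForm n (Pi.single 1 1) = X2 n := by
  funext ⟨μ, d⟩; cases d <;> rfl

noncomputable def toForms (n : ℕ) :
    ExteriorAlgebra ℂ (Fin 2 → ℂ) →ₐ[ℂ] TruncatedAlgebra (wedge n) :=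
  TruncatedAlgebra.liftOfSelfEqZero (wedge n) (coordForm n)
    fun _ => wdg_invariantForm_self n _

lemma toForms_ι (n : ℕ) (v : Fin 2 → ℂ) :
    toForms n (ExteriorAlgebra.ι ℂ v) = TruncatedAlgebra.ofDeg1 (wedge n) (coordForm n v) :=
  TruncatedAlgebra.liftOfSelfEqZero_ι _ _ _

noncomputable def formsMap (n : ℕ) : ExteriorAlgebra ℂ (Fin 2 → ℂ) →ₗ[ℂ] Wring n :=
  (TruncatedAlgebra.equivProd (wedge n)).toLinearMap ∘ₗ (toForms n).toLinearMap

lemma formsMap_one (n : ℕ) : formsMap n 1 = (1, 0, 0) :=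
  congrArg (TruncatedAlgebra.equivProd (wedge n)) (map_one (toForms n))

lemma formsMap_ι (n : ℕ) (v : Fin 2 → ℂ) :
    formsMap n (ExteriorAlgebra.ι ℂ v) = (0, coordForm n v, 0) :=
  congrArg (TruncatedAlgebra.equivProd (wedge n)) (toForms_ι n v)

lemma formsMap_mul (n : ℕ) (x y : ExteriorAlgebra ℂ (Fin 2 → ℂ)) :
    formsMap n (x * y) = Rmul n (formsMap n x) (formsMap n y) :=
  congrArg (TruncatedAlgebra.equivProd (wedge n)) (map_mul (toForms n) x y)

lemma linearIndependent_one_X1_X2_wdg (n : ℕ) :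
    LinearIndependent ℂ ![((1 : ℂ), (0 : Poly1 n), (0 : Om2 n)), (0, X1 n, 0), (0, X2 n, 0),
      (0, 0, wdg n (X1 n) (X2 n))] := by
  rw [Fintype.linearIndependent_iff]
  intro g hg
  simp only [Fin.sum_univ_four, Fin.isValue, Matrix.cons_val_zero, Matrix.cons_val_one,
    Matrix.cons_val, Prod.smul_mk, smul_eq_mul, mul_one, mul_zero, smul_zero, Prod.mk_add_mk,
    add_zero, zero_add, Prod.mk_eq_zero, smul_eq_zero] at hg
  obtain ⟨h0, h12, h3⟩ := hg
  have h1 : g 1 = 0 := by simpa [X1, X2] using congrFun h12 (0, true)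
  have h2 : g 2 = 0 := by simpa [X1, X2] using congrFun h12 (0, false)
  have h3 : g 3 = 0 := h3.resolve_right (wdg_X1_X2_ne_zero n)
  intro i
  fin_cases i <;> assumption

lemma formsMap_comp_monomials (n : ℕ) :
    formsMap n ∘ ![1, ExteriorAlgebra.ι ℂ (Pi.single 0 1), ExteriorAlgebra.ι ℂ (Pi.single 1 1),
      ExteriorAlgebra.ι ℂ (Pi.single 0 1) * ExteriorAlgebra.ι ℂ (Pi.single 1 1)] =
    ![((1 : ℂ), (0 : Poly1 n), (0 : Om2 n)), (0, X1 n, 0), (0, X2 n, 0),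
      (0, 0, wdg n (X1 n) (X2 n))] := by
  funext i
  fin_cases i <;>
    simp [formsMap_one, formsMap_mul, formsMap_ι, coordForm_single_zero, coordForm_single_one,
      Rmul]

theorem stmt18_general (n : ℕ) :
    wdg n (X1 n) (X1 n) = 0
  ∧ wdg n (X2 n) (X2 n) = 0
  ∧ wdg n (X1 n) (X2 n) = - wdg n (X2 n) (X1 n)
  ∧ wdg n (X1 n) (X2 n) ≠ 0
  ∧ ∃ Φ : ExteriorAlgebra ℂ (Fin 2 → ℂ) →ₗ[ℂ] Wring n,
      Function.Injective Φ
    ∧ Φ 1 = (1, 0, 0)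
    ∧ Φ (ExteriorAlgebra.ι ℂ (Pi.single (0 : Fin 2) (1 : ℂ))) = (0, X1 n, 0)
    ∧ Φ (ExteriorAlgebra.ι ℂ (Pi.single (1 : Fin 2) (1 : ℂ))) = (0, X2 n, 0)
    ∧ (∀ x y, Φ (x * y) = Rmul n (Φ x) (Φ y))
    ∧ LinearMap.range Φ = Submodule.span ℂ
        ({((1 : ℂ), (0 : Poly1 n), (0 : Om2 n)), (0, X1 n, 0), (0, X2 n, 0),
          (0, 0, wdg n (X1 n) (X2 n))} : Set (Wring n)) := by
  set e : Fin 4 → ExteriorAlgebra ℂ (Fin 2 → ℂ) :=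
    ![1, ExteriorAlgebra.ι ℂ (Pi.single 0 1), ExteriorAlgebra.ι ℂ (Pi.single 1 1),
      ExteriorAlgebra.ι ℂ (Pi.single 0 1) * ExteriorAlgebra.ι ℂ (Pi.single 1 1)]
  have hli : LinearIndependent ℂ (formsMap n ∘ e) :=
    formsMap_comp_monomials n ▸ linearIndependent_one_X1_X2_wdg n
  have hspan : Submodule.span ℂ (Set.range e) = ⊤ :=
    hli.of_comp.span_eq_top_of_card_eq_finrank
      (by rw [ExteriorAlgebra.finrank_eq_two_pow, Module.finrank_fin_fun]; rfl)
  refine ⟨?_, ?_, ?_, wdg_X1_X2_ne_zero n, formsMap n,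
    LinearMap.injective_of_linearIndependent hspan hli, formsMap_one n, ?_, ?_, formsMap_mul n, ?_⟩
  · rw [X1_eq_invariantForm]
    exact wdg_invariantForm_self n _
  · rw [X2_eq_invariantForm]
    exact wdg_invariantForm_self n _
  · rw [X1_eq_invariantForm, X2_eq_invariantForm]
    exact wdg_invariantForm_anticomm n _ _
  · rw [formsMap_ι, coordForm_single_zero]
  · rw [formsMap_ι, coordForm_single_one]
  · rw [LinearMap.range_eq_map, ← hspan, Submodule.map_span, ← Set.range_comp,
      formsMap_comp_monomials]
    simp only [Matrix.range_cons, Matrix.range_empty, Set.union_empty, Set.singleton_union]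

/-- `X₁∧X₁ = 0 = X₂∧X₂`, `X₁∧X₂ = −X₂∧X₁ ≠ 0`, and the graded ring
`R = ℂ·1 ⊕ span{X₁,X₂} ⊕ span{X₁∧X₂}` under the wedge product is isomorphic as a
graded ℂ-algebra to the exterior algebra `Λ•(ℂ²)`. -/
theorem stmt18 (n : ℕ) [NeZero n] (hn : 3 ≤ n) :
    wdg n (X1 n) (X1 n) = 0
  ∧ wdg n (X2 n) (X2 n) = 0
  ∧ wdg n (X1 n) (X2 n) = - wdg n (X2 n) (X1 n)
  ∧ wdg n (X1 n) (X2 n) ≠ 0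
  ∧ ∃ Φ : ExteriorAlgebra ℂ (Fin 2 → ℂ) →ₗ[ℂ] Wring n,
      Function.Injective Φ
    ∧ Φ 1 = (1, 0, 0)
    ∧ Φ (ExteriorAlgebra.ι ℂ (Pi.single (0 : Fin 2) (1 : ℂ))) = (0, X1 n, 0)
    ∧ Φ (ExteriorAlgebra.ι ℂ (Pi.single (1 : Fin 2) (1 : ℂ))) = (0, X2 n, 0)
    ∧ (∀ x y, Φ (x * y) = Rmul n (Φ x) (Φ y))
    ∧ LinearMap.range Φ = Submodule.span ℂ
        ({((1 : ℂ), (0 : Poly1 n), (0 : Om2 n)), (0, X1 n, 0), (0, X2 n, 0),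
          (0, 0, wdg n (X1 n) (X2 n))} : Set (Wring n)) :=
  stmt18_general n
end

section
/- For the bidirected n-gon with ∂f = Σ_μ (f(μ+1)−f(μ)) ξ_{μ→μ+1} and ∂̄f = Σ_μ (f(μ−1)−f(μ)) ξ_{μ→μ−1}, the trilinear map φ(f₀,f₁,f₂) := ∫ f₀ ∂(f₁) ∧ ∂̄(f₂) satisfies φ(f₀*f₀, f₁, f₁*) = (1/n) Σ_{μ∈ℤ/n} |f₀(μ)|² |f₁(μ+1) − f₁(μ)|² ≥ 0 for all f₀, f₁ ∈ C(ℤ/n), where f* denotes pointwise complex conjugation. -/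
/-- `∂f = Σ_μ (f(μ+1) − f(μ)) ξ_{μ→μ+1}`. -/
noncomputable def pd (n : ℕ) (f : ZMod n → ℂ) : Poly1 n :=
  fun e => if e.2 then f (e.1 + 1) - f e.1 else 0

/-- `∂̄f = Σ_μ (f(μ−1) − f(μ)) ξ_{μ→μ−1}`. -/
noncomputable def pdbar (n : ℕ) (f : ZMod n → ℂ) : Poly1 n :=
  fun e => if e.2 then 0 else f (e.1 - 1) - f e.1

/-- the Hochschild 2-cochain `φ(f₀,f₁,f₂) = ∫ f₀ ∂(f₁) ∧ ∂̄(f₂)`. -/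
noncomputable def phi (n : ℕ) [NeZero n] (f₀ f₁ f₂ : ZMod n → ℂ) : ℂ :=
  intT n (tens n (lAct1 n f₀ (pd n f₁)) (pdbar n f₂))

/-- positivity: `φ(f₀*f₀, f₁, f₁*) = (1/n) Σ_μ |f₀(μ)|² |f₁(μ+1)−f₁(μ)|² ≥ 0`. -/
theorem stmt19 (n : ℕ) [NeZero n] (hn : 3 ≤ n) (f₀ f₁ : ZMod n → ℂ) :
    phi n (fun μ => star (f₀ μ) * f₀ μ) f₁ (fun μ => star (f₁ μ))
      = (((1 / (n : ℝ)) * ∑ μ : ZMod n, ‖f₀ μ‖ ^ 2 * ‖f₁ (μ + 1) - f₁ μ‖ ^ 2 : ℝ) : ℂ)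
  ∧ 0 ≤ (1 / (n : ℝ)) * ∑ μ : ZMod n, ‖f₀ μ‖ ^ 2 * ‖f₁ (μ + 1) - f₁ μ‖ ^ 2 := by
  constructor
  · unfold phi intT tens lAct1 pd pdbar eps
    simp only [if_true, if_false]
    push_cast
    rw [Finset.mul_sum, Finset.mul_sum]
    apply Finset.sum_congr rfl
    intro μ _
    simp only [mul_zero, zero_mul, zero_sub, add_sub_cancel_right]
    have h1 : (star (f₁ μ) - star (f₁ (μ+1))) = star (f₁ μ - f₁ (μ+1)) := by
      simp [star_sub]
    rw [h1]
    have h2 : star (f₀ μ) * f₀ μ = (‖f₀ μ‖^2 : ℝ) := by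
      rw [Complex.star_def, Complex.conj_mul']; norm_cast
    have h3 : (f₁ (μ+1) - f₁ μ) * star (f₁ μ - f₁ (μ+1)) = -(‖f₁ (μ+1) - f₁ μ‖^2 : ℝ) := by
      have : f₁ μ - f₁ (μ+1) = -(f₁ (μ+1) - f₁ μ) := by ring
      rw [this, star_neg, mul_neg, Complex.star_def, Complex.mul_conj']
      norm_cast
    rw [mul_assoc, h3, h2]
    push_cast
    ring
  · positivity
end
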